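/- There exist constants a₄, a₅, a₆ > 0 and E_γ > 0, independent of η (depending only on c, α, γ, q₁, q₂), such that for all η > E_γ: (i) ‖2 g_η' Φ'‖² ≤ a₄ η^{5γ/6} exp(−(Im(c)/2) η^{(3−γ)/6}); (ii) ‖g_η'' Φ‖² ≤ a₅ η^{−γ/2} exp(−(Im(c)/2) η^{(3−γ)/6}); (iii) for each k ∈ {1, 3, 4}, ∫_ℝ |s^k Φ(x₀+s) g_η(x₀+s)|² ds ≤ a₆ η^{(γ−1)(2k+1)/4}. -/

import Mathlib

open Complex MeasureTheory

noncomputable def Phi (c : ℂ) (α γ η : ℝ) (x : ℝ) : ℂ :=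
  Complex.exp (-((Complex.I * (α : ℂ) * ((η ^ (γ / 2) : ℝ) : ℂ)) *
      ((x : ℂ) - ((α * η ^ ((1 : ℝ) / 2) : ℝ) : ℂ))
    + (-Complex.I * c * ((η ^ ((1 - γ) / 2) : ℝ) : ℂ)) *
      ((x : ℂ) - ((α * η ^ ((1 : ℝ) / 2) : ℝ) : ℂ)) ^ 2 / 2
    + (-Complex.I * c / (2 * (α : ℂ)) * ((η ^ (-(γ / 2)) : ℝ) : ℂ) *
        (1 + c * ((η ^ (1 - γ) : ℝ) : ℂ))) *
      ((x : ℂ) - ((α * η ^ ((1 : ℝ) / 2) : ℝ) : ℂ)) ^ 3 / 3))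

section helpers

variable (c : ℂ) (α γ η : ℝ)

/-- abbreviations for the three coefficients -/
noncomputable def PsiA : ℂ := Complex.I * (α : ℂ) * ((η ^ (γ / 2) : ℝ) : ℂ)
noncomputable def PsiB (c : ℂ) (γ η : ℝ) : ℂ := -Complex.I * c * ((η ^ ((1 - γ) / 2) : ℝ) : ℂ)
noncomputable def PsiC (c : ℂ) (α γ η : ℝ) : ℂ :=
  -Complex.I * c / (2 * (α : ℂ)) * ((η ^ (-(γ / 2)) : ℝ) : ℂ) * (1 + c * ((η ^ (1 - γ) : ℝ) : ℂ))

lemma Phi_eq (x : ℝ) :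
    Phi c α γ η x = Complex.exp (-(PsiA α γ η * ((x - α * η ^ ((1:ℝ)/2) : ℝ) : ℂ)
      + PsiB c γ η * ((x - α * η ^ ((1:ℝ)/2) : ℝ) : ℂ) ^ 2 / 2
      + PsiC c α γ η * ((x - α * η ^ ((1:ℝ)/2) : ℝ) : ℂ) ^ 3 / 3)) := by
  unfold Phi PsiA PsiB PsiC
  push_cast
  ring_nf

lemma phi_hasDerivAt (x : ℝ) :
    HasDerivAt (Phi c α γ η)
      (-(PsiA α γ η + PsiB c γ η * ((x - α * η ^ ((1:ℝ)/2) : ℝ) : ℂ)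
        + PsiC c α γ η * ((x - α * η ^ ((1:ℝ)/2) : ℝ) : ℂ) ^ 2) * Phi c α γ η x) x := by
  have hu : ∀ y : ℝ, HasDerivAt (fun y : ℝ => ((y - α * η ^ ((1:ℝ)/2) : ℝ) : ℂ)) 1 y := by
    intro y
    simpa using ((hasDerivAt_id y).sub_const (α * η ^ ((1:ℝ)/2))).ofReal_comp
  have h1 : HasDerivAt (fun y : ℝ => -(PsiA α γ η * ((y - α * η ^ ((1:ℝ)/2) : ℝ) : ℂ)
      + PsiB c γ η * ((y - α * η ^ ((1:ℝ)/2) : ℝ) : ℂ) ^ 2 / 2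
      + PsiC c α γ η * ((y - α * η ^ ((1:ℝ)/2) : ℝ) : ℂ) ^ 3 / 3))
      (-(PsiA α γ η + PsiB c γ η * ((x - α * η ^ ((1:ℝ)/2) : ℝ) : ℂ)
        + PsiC c α γ η * ((x - α * η ^ ((1:ℝ)/2) : ℝ) : ℂ) ^ 2)) x := by
    have ha := ((hu x).const_mul (PsiA α γ η))
    have hb := ((((hu x).mul (hu x))).const_mul (PsiB c γ η)).div_const 2
    have hc := ((((hu x).mul ((hu x).mul (hu x)))).const_mul (PsiC c α γ η)).div_const 3
    have := ((ha.add hb).add hc).neg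
    convert this using 2 <;> first | rfl | (simp only [Pi.add_apply, Pi.neg_apply, Pi.mul_apply]; ring)
  have := h1.cexp
  have h2 : ∀ y : ℝ, Phi c α γ η y = Complex.exp (-(PsiA α γ η * ((y - α * η ^ ((1:ℝ)/2) : ℝ) : ℂ)
      + PsiB c γ η * ((y - α * η ^ ((1:ℝ)/2) : ℝ) : ℂ) ^ 2 / 2
      + PsiC c α γ η * ((y - α * η ^ ((1:ℝ)/2) : ℝ) : ℂ) ^ 3 / 3)) := Phi_eq c α γ η
  rw [funext h2]
  simpa [mul_comm] using this

lemma phi_norm (hα : 0 < α) (x : ℝ) :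
    ‖Phi c α γ η x‖ = Real.exp (-(c.im * η ^ ((1-γ)/2) * (x - α * η ^ ((1:ℝ)/2)) ^ 2 / 2
      + ((c.im + η ^ (1-γ) * (2 * c.re * c.im)) * η ^ (-(γ/2)) / (2*α)) *
        (x - α * η ^ ((1:ℝ)/2)) ^ 3 / 3)) := by
  have hα' : (α:ℝ) ≠ 0 := ne_of_gt hα
  rw [Phi_eq, Complex.norm_exp]
  congr 1
  set s : ℝ := x - α * η ^ ((1:ℝ)/2) with hs
  have hA : (PsiA α γ η).re = 0 := by simp [PsiA]
  have hB : (PsiB c γ η).re = c.im * η ^ ((1-γ)/2) := by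
    simp [PsiB, Complex.mul_re]
  have hC : (PsiC c α γ η).re
      = (c.im + η ^ (1-γ) * (2 * c.re * c.im)) * η ^ (-(γ/2)) / (2*α) := by
    unfold PsiC
    rw [show (2*(α:ℂ)) = ((2*α:ℝ):ℂ) by push_cast; ring, div_eq_mul_inv, ← Complex.ofReal_inv]
    simp [Complex.mul_re, Complex.mul_im, Complex.add_re, Complex.add_im]
    field_simp
    try ring
  have key : ∀ z w u : ℂ, (-(z + w/2 + u/3)).re = -(z.re + w.re/2 + u.re/3) := by
    intro z w u
    simp [Complex.div_re, Complex.normSq_apply]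
    try ring
  rw [show ((s:ℂ))^2 = ((s^2:ℝ):ℂ) by push_cast; ring,
      show ((s:ℂ))^3 = ((s^3:ℝ):ℂ) by push_cast; ring, key,
      mul_comm (PsiA α γ η), mul_comm (PsiB c γ η), mul_comm (PsiC c α γ η),
      Complex.re_ofReal_mul, Complex.re_ofReal_mul, Complex.re_ofReal_mul, hA, hB, hC]
  ring

end helpers

set_option maxHeartbeats 1600000 in
theorem truncated_quasimode_error_bounds (c : ℂ) (hre : 0 < c.re) (him : 0 < c.im)
    (α γ : ℝ) (hα : 0 < α) (hγ1 : 1 ≤ γ) (hγ3 : γ < 3)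
    (q₁ q₂ : ℝ) (hq₁ : 0 < q₁) (hq₂ : 0 < q₂)
    (g : ℝ → ℝ → ℝ)
    (hg_smooth : ∀ η : ℝ, 0 < η → ContDiff ℝ (⊤ : ℕ∞) (g η))
    (hg_nonneg : ∀ η : ℝ, 0 < η → ∀ x : ℝ, 0 ≤ g η x)
    (hg_le_one : ∀ η : ℝ, 0 < η → ∀ x : ℝ, g η x ≤ 1)
    (hg_one : ∀ η : ℝ, 0 < η → ∀ x : ℝ,
      |x - α * η ^ ((1 : ℝ) / 2)| < η ^ (γ / 6) → g η x = 1)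
    (hg_zero : ∀ η : ℝ, 0 < η → ∀ x : ℝ,
      |x - α * η ^ ((1 : ℝ) / 2)| > 2 * η ^ (γ / 6) → g η x = 0)
    (hg_deriv : ∀ η : ℝ, 0 < η → ∀ x : ℝ, |deriv (g η) x| ≤ q₁ * η ^ (-(γ / 6)))
    (hg_deriv2 : ∀ η : ℝ, 0 < η → ∀ x : ℝ,
      |deriv (deriv (g η)) x| ≤ q₂ * η ^ (-2 * (γ / 6))) :
    ∃ a₄ : ℝ, 0 < a₄ ∧ ∃ a₅ : ℝ, 0 < a₅ ∧ ∃ a₆ : ℝ, 0 < a₆ ∧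
      ∃ E : ℝ, 0 < E ∧ ∀ η : ℝ, E < η →
      (∫ x : ℝ, ‖2 * ((deriv (g η) x : ℝ) : ℂ) * deriv (Phi c α γ η) x‖ ^ 2) ≤
        a₄ * η ^ (5 * γ / 6) * Real.exp (-(c.im / 2) * η ^ ((3 - γ) / 6)) ∧
      (∫ x : ℝ, ‖((deriv (deriv (g η)) x : ℝ) : ℂ) * Phi c α γ η x‖ ^ 2) ≤
        a₅ * η ^ (-(γ / 2)) * Real.exp (-(c.im / 2) * η ^ ((3 - γ) / 6)) ∧
      ∀ k : ℕ, k = 1 ∨ k = 3 ∨ k = 4 →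
        (∫ s : ℝ, ‖(s : ℂ) ^ k * Phi c α γ η (α * η ^ ((1 : ℝ) / 2) + s) *
            (g η (α * η ^ ((1 : ℝ) / 2) + s) : ℂ)‖ ^ 2) ≤
          a₆ * η ^ ((γ - 1) * (2 * (k : ℝ) + 1) / 4) := by
  have hc0 : c ≠ 0 := fun h => by simp [h] at hre
  have hcn : 0 < ‖c‖ := norm_pos_iff.2 hc0
  set C₀ : ℝ := 8 / (3 * α) * (c.im + 2 * c.re * c.im) with hC₀def
  set C₁ : ℝ := α + 2 * ‖c‖ + 2 * ‖c‖ * (1 + ‖c‖) / α with hC₁def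
  have hC₁ : 0 < C₁ := by positivity
  set D : ℕ → ℝ := fun k =>
    Real.exp C₀ * (k.factorial : ℝ) * (2 / c.im) ^ k * Real.sqrt (2 * Real.pi / c.im) with hDdef
  have hDpos : ∀ k, 0 < D k := by
    intro k
    have h1 : (0:ℝ) < (k.factorial : ℝ) := by exact_mod_cast k.factorial_pos
    simp only [hDdef]
    positivity
  refine ⟨16 * q₁ ^ 2 * C₁ ^ 2 * Real.exp C₀, by positivity,
    4 * q₂ ^ 2 * Real.exp C₀, by positivity,
    D 1 + D 3 + D 4, by have := hDpos 1; have := hDpos 3; have := hDpos 4; linarith,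
    1, one_pos, ?_⟩
  intro η hη
  have hη0 : (0:ℝ) < η := lt_trans one_pos hη
  set x₀ : ℝ := α * η ^ ((1:ℝ)/2) with hx₀def
  set d : ℝ := η ^ (γ/6) with hddef
  have hd0 : 0 < d := Real.rpow_pos_of_pos hη0 _
  set b : ℝ := c.im * η ^ ((1-γ)/2) with hbdef
  have hb0 : 0 < b := mul_pos him (Real.rpow_pos_of_pos hη0 _)
  have hsmall : η ^ (1-γ) ≤ 1 :=
    Real.rpow_le_one_of_one_le_of_nonpos hη.le (by linarith)
  have rpow_add' : ∀ a e : ℝ, η ^ a * η ^ e = η ^ (a+e) := fun a e =>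
    (Real.rpow_add hη0 a e).symm
  have sq_rpow : ∀ a : ℝ, (η ^ a) ^ (2:ℕ) = η ^ (2*a) := by
    intro a
    rw [← Real.rpow_natCast (η ^ a) 2, ← Real.rpow_mul hη0.le]
    norm_num [mul_comm]
  -- squared norm bound for Phi on the ball |x - x₀| ≤ 2d
  have hPhiSq : ∀ x : ℝ, |x - x₀| ≤ 2*d →
      ‖Phi c α γ η x‖ ^ 2 ≤ Real.exp C₀ * Real.exp (-b * (x - x₀)^2) := by
    intro x hx
    rw [phi_norm c α γ η hα x, ← hx₀def, sq, ← Real.exp_add, ← Real.exp_add]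
    apply Real.exp_le_exp.2
    set s : ℝ := x - x₀ with hsdef
    set R : ℝ := (c.im + η ^ (1-γ) * (2 * c.re * c.im)) * η ^ (-(γ/2)) / (2*α) with hRdef
    have hprod : (0:ℝ) < 2 * c.re * c.im := by positivity
    have hR : 0 ≤ R := by
      apply div_nonneg _ (by linarith)
      apply mul_nonneg _ (Real.rpow_pos_of_pos hη0 _).le
      nlinarith [(Real.rpow_pos_of_pos hη0 (1-γ)).le]
    have hd3 : d ^ (3:ℕ) = η ^ (γ/2) := by
      rw [hddef, ← Real.rpow_natCast (η ^ (γ/6)) 3, ← Real.rpow_mul hη0.le]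
      congr 1
      ring
    have hRd : R * d^(3:ℕ) ≤ (c.im + 2 * c.re * c.im) / (2*α) := by
      have h1 : R * d^(3:ℕ) = (c.im + η ^ (1-γ) * (2 * c.re * c.im)) *
          (η ^ (-(γ/2)) * η ^ (γ/2)) / (2*α) := by rw [hd3, hRdef]; ring
      rw [h1, rpow_add' (-(γ/2)) (γ/2)]
      simp only [neg_add_cancel, Real.rpow_zero, mul_one]
      apply (div_le_div_iff_of_pos_right (by linarith)).2
      nlinarith [(Real.rpow_pos_of_pos hη0 (1-γ)).le]
    have hs3 : -s^3 ≤ 8*d^(3:ℕ) := by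
      calc -s^3 ≤ |s^3| := neg_le_abs _
      _ = |s|^3 := abs_pow s 3
      _ ≤ (2*d)^3 := pow_le_pow_left₀ (abs_nonneg s) hx 3
      _ = 8*d^(3:ℕ) := by push_cast; ring
    have hcube : -(2*R*s^3/3) ≤ C₀ := by
      have h1 : -(2*R*s^3/3) = (2*R/3) * (-s^3) := by ring
      have h2 : (2*R/3) * (-s^3) ≤ (2*R/3) * (8*d^(3:ℕ)) :=
        mul_le_mul_of_nonneg_left hs3 (by linarith)
      have h3 : (2*R/3)*(8*d^(3:ℕ)) = (16/3) * (R*d^(3:ℕ)) := by ring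
      have h4 : (16/3:ℝ) * (R*d^(3:ℕ)) ≤ (16/3) * ((c.im + 2 * c.re * c.im)/(2*α)) :=
        mul_le_mul_of_nonneg_left hRd (by norm_num)
      have h5 : (16/3:ℝ) * ((c.im + 2 * c.re * c.im)/(2*α)) = C₀ := by
        rw [hC₀def]; field_simp; ring
      linarith
    rw [hbdef]
    linarith [hcube]
  -- exponential smallness on the annulus d ≤ |x - x₀| ≤ 2d
  have hd2 : d ^ (2:ℕ) = η ^ (γ/3) := by
    rw [hddef, sq_rpow]; congr 1; ring
  have hE36 : η ^ ((1-γ)/2) * η ^ (γ/3) = η ^ ((3-γ)/6) := by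
    rw [rpow_add']; congr 1; ring
  have hPhiAnn : ∀ x : ℝ, d ≤ |x - x₀| → |x - x₀| ≤ 2*d →
      ‖Phi c α γ η x‖ ^ 2 ≤ Real.exp C₀ * Real.exp (-(c.im/2) * η ^ ((3-γ)/6)) := by
    intro x hx1 hx2
    refine (hPhiSq x hx2).trans ?_
    apply mul_le_mul_of_nonneg_left _ (Real.exp_pos _).le
    apply Real.exp_le_exp.2
    have h1 : d^(2:ℕ) ≤ (x-x₀)^2 := by
      calc d^(2:ℕ) ≤ |x-x₀|^2 := pow_le_pow_left₀ hd0.le hx1 2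
      _ = (x-x₀)^2 := _root_.sq_abs _
    have h2 : b * d^(2:ℕ) = c.im * η ^ ((3-γ)/6) := by
      rw [hbdef, hd2, mul_assoc, hE36]
    nlinarith [Real.rpow_pos_of_pos hη0 ((3-γ)/6), hb0]
  -- derivative bound
  have hDerivB : ∀ x : ℝ, |x - x₀| ≤ 2*d →
      ‖deriv (Phi c α γ η) x‖ ≤ (C₁ * η ^ (γ/2)) * ‖Phi c α γ η x‖ := by
    intro x hx
    rw [(phi_hasDerivAt c α γ η x).deriv]
    rw [norm_mul]
    apply mul_le_mul_of_nonneg_right _ (norm_nonneg _)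
    rw [norm_neg]
    set s : ℝ := x - x₀ with hsdef
    have hscast : ((x:ℝ) - α * η ^ ((1:ℝ)/2)) = s := by rw [hsdef, hx₀def]
    try rw [hscast]
    have hAn : ‖PsiA α γ η‖ = α * η ^ (γ/2) := by
      simp [PsiA, map_mul, Complex.norm_real, Real.norm_eq_abs,
        abs_of_pos hα, abs_of_pos (Real.rpow_pos_of_pos hη0 (γ/2))]
    have hBn : ‖PsiB c γ η‖ = ‖c‖ * η ^ ((1-γ)/2) := by
      simp [PsiB, map_mul, Complex.norm_real, Real.norm_eq_abs,
        abs_of_pos (Real.rpow_pos_of_pos hη0 ((1-γ)/2))]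
    have hCn : ‖PsiC c α γ η‖ ≤ ‖c‖ * (1 + ‖c‖) / (2*α) * η ^ (-(γ/2)) := by
      have h1 : ‖(1 : ℂ) + c * ((η ^ (1-γ) : ℝ) : ℂ)‖ ≤ 1 + ‖c‖ := by
        refine (norm_add_le _ _).trans ?_
        simp only [norm_one, norm_mul, Complex.norm_real, Real.norm_eq_abs]
        have : ‖c‖ * |η ^ (1-γ)| ≤ ‖c‖ * 1 := by
          apply mul_le_mul_of_nonneg_left _ (norm_nonneg c)
          rw [abs_of_pos (Real.rpow_pos_of_pos hη0 _)]
          exact hsmall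
        simpa using this
      have h2 : ‖PsiC c α γ η‖ = ‖c‖ / (2*α) * η ^ (-(γ/2)) *
          ‖(1 : ℂ) + c * ((η ^ (1-γ) : ℝ) : ℂ)‖ := by
        simp [PsiC, map_mul, map_div₀, Complex.norm_real, Real.norm_eq_abs,
          abs_of_pos (Real.rpow_pos_of_pos hη0 (-(γ/2))), abs_of_pos hα]
        try ring
      rw [h2]
      have h3 : (0:ℝ) ≤ ‖c‖ / (2*α) * η ^ (-(γ/2)) := by positivity
      calc ‖c‖ / (2*α) * η ^ (-(γ/2)) * ‖(1 : ℂ) + c * ((η ^ (1-γ) : ℝ) : ℂ)‖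
          ≤ ‖c‖ / (2*α) * η ^ (-(γ/2)) * (1 + ‖c‖) := by
            exact mul_le_mul_of_nonneg_left h1 h3
      _ = ‖c‖ * (1 + ‖c‖) / (2*α) * η ^ (-(γ/2)) := by ring
    have hsabs : ‖((s:ℝ) : ℂ)‖ = |s| := by
      simp [Complex.norm_real, Real.norm_eq_abs]
    calc ‖PsiA α γ η + PsiB c γ η * ((s:ℝ):ℂ) + PsiC c α γ η * ((s:ℝ):ℂ)^2‖
        ≤ ‖PsiA α γ η‖ + ‖PsiB c γ η‖ * |s| + ‖PsiC c α γ η‖ * |s|^2 := by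
          refine (norm_add_le _ _).trans ?_
          gcongr
          · refine (norm_add_le _ _).trans ?_
            gcongr
            rw [norm_mul, hsabs]
          · rw [norm_mul, norm_pow, hsabs]
    _ ≤ α * η ^ (γ/2) + (‖c‖ * η ^ ((1-γ)/2)) * (2*d)
          + (‖c‖ * (1 + ‖c‖) / (2*α) * η ^ (-(γ/2))) * (2*d)^2 := by
          have b2 : ‖PsiB c γ η‖ * |s| ≤ (‖c‖ * η ^ ((1-γ)/2)) * (2*d) :=
            mul_le_mul hBn.le hx (abs_nonneg s) (by positivity)
          have b3 : ‖PsiC c α γ η‖ * |s|^2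
              ≤ (‖c‖ * (1 + ‖c‖) / (2*α) * η ^ (-(γ/2))) * (2*d)^2 := by
            apply mul_le_mul hCn _ (by positivity) (by positivity)
            exact pow_le_pow_left₀ (abs_nonneg s) hx 2
          linarith [hAn.le]
    _ ≤ (C₁ * η ^ (γ/2)) := by
          have e1 : (‖c‖ * η ^ ((1-γ)/2)) * (2*d) = 2 * ‖c‖ * η ^ ((1-γ)/2 + γ/6) := by
            rw [hddef, ← rpow_add']; ring
          have e2 : η ^ ((1-γ)/2 + γ/6) ≤ η ^ (γ/2) :=
            Real.rpow_le_rpow_of_exponent_le hη.le (by linarith)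
          have e3 : (‖c‖ * (1 + ‖c‖) / (2*α) * η ^ (-(γ/2))) * (2*d)^2
              = 2 * ‖c‖ * (1 + ‖c‖) / α * η ^ (-(γ/2) + γ/3) := by
            rw [hddef, mul_pow, sq_rpow, ← rpow_add']
            field_simp
            ring
          have e4 : η ^ (-(γ/2) + γ/3) ≤ η ^ (γ/2) :=
            Real.rpow_le_rpow_of_exponent_le hη.le (by linarith)
          rw [e1, e3, hC₁def]
          have hc2 : (0:ℝ) ≤ 2 * ‖c‖ := by positivity
          have hc3 : (0:ℝ) ≤ 2 * ‖c‖ * (1 + ‖c‖) / α := by positivity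
          nlinarith [mul_le_mul_of_nonneg_left e2 hc2, mul_le_mul_of_nonneg_left e4 hc3]
  -- vanishing of cut-off derivatives
  have hg1in : ∀ x : ℝ, |x - x₀| < d → deriv (g η) x = 0 := by
    intro x hx
    have hmem : Metric.ball x₀ d ∈ nhds x :=
      Metric.isOpen_ball.mem_nhds (by simpa [Metric.mem_ball, Real.dist_eq] using hx)
    have heq : g η =ᶠ[nhds x] fun _ => 1 :=
      Filter.eventually_of_mem hmem (fun y hy => hg_one η hη0 y
        (by simpa [Metric.mem_ball, Real.dist_eq, hx₀def, hddef] using hy))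
    rw [heq.deriv_eq]; simp
  have hg1out : ∀ x : ℝ, 2*d < |x - x₀| → deriv (g η) x = 0 := by
    intro x hx
    have hmem : (Metric.closedBall x₀ (2*d))ᶜ ∈ nhds x :=
      Metric.isClosed_closedBall.isOpen_compl.mem_nhds
        (by simpa [Metric.mem_closedBall, Real.dist_eq, not_le] using hx)
    have heq : g η =ᶠ[nhds x] fun _ => 0 :=
      Filter.eventually_of_mem hmem (fun y hy => hg_zero η hη0 y
        (by simpa [Metric.mem_closedBall, Real.dist_eq, not_le, hx₀def, hddef] using hy))
    rw [heq.deriv_eq]; simp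
  have hg2in : ∀ x : ℝ, |x - x₀| < d → deriv (deriv (g η)) x = 0 := by
    intro x hx
    have hmem : Metric.ball x₀ d ∈ nhds x :=
      Metric.isOpen_ball.mem_nhds (by simpa [Metric.mem_ball, Real.dist_eq] using hx)
    have heq : deriv (g η) =ᶠ[nhds x] fun _ => 0 :=
      Filter.eventually_of_mem hmem (fun y hy => hg1in y
        (by simpa [Metric.mem_ball, Real.dist_eq] using hy))
    rw [heq.deriv_eq]; simp
  have hg2out : ∀ x : ℝ, 2*d < |x - x₀| → deriv (deriv (g η)) x = 0 := by
    intro x hx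
    have hmem : (Metric.closedBall x₀ (2*d))ᶜ ∈ nhds x :=
      Metric.isClosed_closedBall.isOpen_compl.mem_nhds
        (by simpa [Metric.mem_closedBall, Real.dist_eq, not_le] using hx)
    have heq : deriv (g η) =ᶠ[nhds x] fun _ => 0 :=
      Filter.eventually_of_mem hmem (fun y hy => hg1out y
        (by simpa [Metric.mem_closedBall, Real.dist_eq, not_le] using hy))
    rw [heq.deriv_eq]; simp
  -- annulus set
  set S : Set ℝ := Metric.closedBall x₀ (2*d) \ Metric.ball x₀ d with hSdef
  have hSmeas : MeasurableSet S := measurableSet_closedBall.diff measurableSet_ball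
  have hSvol : volume S ≤ ENNReal.ofReal (4*d) := by
    calc volume S ≤ volume (Metric.closedBall x₀ (2*d)) := measure_mono Set.diff_subset
    _ = ENNReal.ofReal (2*(2*d)) := Real.volume_closedBall _ _
    _ = ENNReal.ofReal (4*d) := by congr 1; ring
  have hSfin : volume S < ⊤ := lt_of_le_of_lt hSvol ENNReal.ofReal_lt_top
  have hStoReal : (volume S).toReal ≤ 4*d := ENNReal.toReal_le_of_le_ofReal (by linarith) hSvol
  have hSmem : ∀ x : ℝ, x ∈ S ↔ (d ≤ |x - x₀| ∧ |x - x₀| ≤ 2*d) := by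
    intro x
    simp [hSdef, Set.mem_diff, Metric.mem_closedBall, Metric.mem_ball, Real.dist_eq, not_lt,
      and_comm]
  refine ⟨?_, ?_, ?_⟩
  -- Part (i)
  · set M₄ : ℝ := 4 * (q₁ * η ^ (-(γ/6)))^2 * (C₁ * η ^ (γ/2))^2 *
      (Real.exp C₀ * Real.exp (-(c.im/2) * η ^ ((3-γ)/6))) with hM₄def
    have hM₄0 : 0 ≤ M₄ := by positivity
    have hpt : ∀ x : ℝ, ‖2 * ((deriv (g η) x : ℝ) : ℂ) * deriv (Phi c α γ η) x‖ ^ 2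
        ≤ S.indicator (fun _ => M₄) x := by
      intro x
      by_cases hxS : x ∈ S
      · rw [Set.indicator_of_mem hxS]
        obtain ⟨hx1, hx2⟩ := (hSmem x).1 hxS
        have e1 : |deriv (g η) x| ≤ q₁ * η ^ (-(γ/6)) := hg_deriv η hη0 x
        have e2 := hDerivB x hx2
        have e3 := hPhiAnn x hx1 hx2
        have hnorm : ‖2 * ((deriv (g η) x : ℝ) : ℂ) * deriv (Phi c α γ η) x‖
            = 2 * |deriv (g η) x| * ‖deriv (Phi c α γ η) x‖ := by
          simp [norm_mul, Complex.norm_real, Real.norm_eq_abs]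
        rw [hnorm]
        have t1 : |deriv (g η) x|^2 ≤ (q₁ * η ^ (-(γ/6)))^2 :=
          pow_le_pow_left₀ (abs_nonneg _) e1 2
        have t2 : ‖deriv (Phi c α γ η) x‖^2 ≤ ((C₁ * η ^ (γ/2)) * ‖Phi c α γ η x‖)^2 :=
          pow_le_pow_left₀ (norm_nonneg _) e2 2
        have t3 := mul_le_mul t1 t2 (by positivity) (by positivity)
        calc (2 * |deriv (g η) x| * ‖deriv (Phi c α γ η) x‖)^2
            = 4 * (|deriv (g η) x|^2 * ‖deriv (Phi c α γ η) x‖^2) := by ring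
        _ ≤ 4 * ((q₁ * η ^ (-(γ/6)))^2 * ((C₁ * η ^ (γ/2)) * ‖Phi c α γ η x‖)^2) := by
            linarith
        _ = 4 * (q₁ * η ^ (-(γ/6)))^2 * (C₁ * η ^ (γ/2))^2 * ‖Phi c α γ η x‖^2 := by ring
        _ ≤ M₄ := by
            rw [hM₄def]
            have h0 : (0:ℝ) ≤ 4 * (q₁ * η ^ (-(γ/6)))^2 * (C₁ * η ^ (γ/2))^2 := by positivity
            exact mul_le_mul_of_nonneg_left e3 h0
      · rw [Set.indicator_of_notMem hxS]
        have h0 : deriv (g η) x = 0 := by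
          rcases not_and_or.1 (fun h => hxS ((hSmem x).2 h)) with h | h
          · exact hg1in x (not_le.1 h)
          · exact hg1out x (not_le.1 h)
        simp [h0]
    calc (∫ x : ℝ, ‖2 * ((deriv (g η) x : ℝ) : ℂ) * deriv (Phi c α γ η) x‖ ^ 2)
        ≤ ∫ x : ℝ, S.indicator (fun _ => M₄) x := by
          apply integral_mono_of_nonneg (Filter.Eventually.of_forall fun x => by positivity)
            _ (Filter.Eventually.of_forall hpt)
          exact (integrable_indicator_iff hSmeas).2 (integrableOn_const hSfin.ne)
    _ = (volume S).toReal • M₄ := integral_indicator_const M₄ hSmeas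
    _ ≤ 4*d*M₄ := by
        rw [smul_eq_mul]
        exact mul_le_mul_of_nonneg_right hStoReal hM₄0
    _ ≤ 16 * q₁ ^ 2 * C₁ ^ 2 * Real.exp C₀ * η ^ (5*γ/6) *
          Real.exp (-(c.im/2) * η ^ ((3-γ)/6)) := by
        apply le_of_eq
        rw [hM₄def, hddef]
        rw [show (4:ℝ) * η ^ (γ/6) * (4 * (q₁ * η ^ (-(γ/6)))^2 * (C₁ * η ^ (γ/2))^2 *
            (Real.exp C₀ * Real.exp (-(c.im/2) * η ^ ((3-γ)/6))))
          = 16 * q₁ ^ 2 * C₁ ^ 2 * Real.exp C₀ *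
            (η ^ (γ/6) * ((η ^ (-(γ/6)))^(2:ℕ) * (η ^ (γ/2))^(2:ℕ))) *
            Real.exp (-(c.im/2) * η ^ ((3-γ)/6)) from by ring]
        rw [sq_rpow, sq_rpow, rpow_add', rpow_add']
        congr 2
        ring
  -- Part (ii)
  · set M₅ : ℝ := (q₂ * η ^ (-2*(γ/6)))^2 *
      (Real.exp C₀ * Real.exp (-(c.im/2) * η ^ ((3-γ)/6))) with hM₅def
    have hM₅0 : 0 ≤ M₅ := by positivity
    have hpt : ∀ x : ℝ, ‖((deriv (deriv (g η)) x : ℝ) : ℂ) * Phi c α γ η x‖ ^ 2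
        ≤ S.indicator (fun _ => M₅) x := by
      intro x
      by_cases hxS : x ∈ S
      · rw [Set.indicator_of_mem hxS]
        obtain ⟨hx1, hx2⟩ := (hSmem x).1 hxS
        have e1 : |deriv (deriv (g η)) x| ≤ q₂ * η ^ (-2*(γ/6)) := hg_deriv2 η hη0 x
        have e3 := hPhiAnn x hx1 hx2
        have hnorm : ‖((deriv (deriv (g η)) x : ℝ) : ℂ) * Phi c α γ η x‖
            = |deriv (deriv (g η)) x| * ‖Phi c α γ η x‖ := by
          simp [norm_mul, Complex.norm_real, Real.norm_eq_abs]
        rw [hnorm]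
        have t1 : |deriv (deriv (g η)) x|^2 ≤ (q₂ * η ^ (-2*(γ/6)))^2 :=
          pow_le_pow_left₀ (abs_nonneg _) e1 2
        calc (|deriv (deriv (g η)) x| * ‖Phi c α γ η x‖)^2
            = |deriv (deriv (g η)) x|^2 * ‖Phi c α γ η x‖^2 := by ring
        _ ≤ (q₂ * η ^ (-2*(γ/6)))^2 * (Real.exp C₀ * Real.exp (-(c.im/2) * η ^ ((3-γ)/6))) :=
            mul_le_mul t1 e3 (by positivity) (by positivity)
        _ = M₅ := by rw [hM₅def]
      · rw [Set.indicator_of_notMem hxS]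
        have h0 : deriv (deriv (g η)) x = 0 := by
          rcases not_and_or.1 (fun h => hxS ((hSmem x).2 h)) with h | h
          · exact hg2in x (not_le.1 h)
          · exact hg2out x (not_le.1 h)
        simp [h0]
    calc (∫ x : ℝ, ‖((deriv (deriv (g η)) x : ℝ) : ℂ) * Phi c α γ η x‖ ^ 2)
        ≤ ∫ x : ℝ, S.indicator (fun _ => M₅) x := by
          apply integral_mono_of_nonneg (Filter.Eventually.of_forall fun x => by positivity)
            _ (Filter.Eventually.of_forall hpt)
          exact (integrable_indicator_iff hSmeas).2 (integrableOn_const hSfin.ne)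
    _ = (volume S).toReal • M₅ := integral_indicator_const M₅ hSmeas
    _ ≤ 4*d*M₅ := by
        rw [smul_eq_mul]
        exact mul_le_mul_of_nonneg_right hStoReal hM₅0
    _ ≤ 4 * q₂ ^ 2 * Real.exp C₀ * η ^ (-(γ/2)) * Real.exp (-(c.im/2) * η ^ ((3-γ)/6)) := by
        apply le_of_eq
        rw [hM₅def, hddef]
        rw [show (4:ℝ) * η ^ (γ/6) * ((q₂ * η ^ (-2*(γ/6)))^2 *
            (Real.exp C₀ * Real.exp (-(c.im/2) * η ^ ((3-γ)/6))))
          = 4 * q₂ ^ 2 * Real.exp C₀ * (η ^ (γ/6) * (η ^ (-2*(γ/6)))^(2:ℕ)) *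
            Real.exp (-(c.im/2) * η ^ ((3-γ)/6)) from by ring]
        rw [sq_rpow, rpow_add']
        congr 2
        ring
  -- Part (iii)
  · intro k hk
    have hfacpos : (0:ℝ) < (k.factorial : ℝ) := by exact_mod_cast k.factorial_pos
    set K : ℝ := Real.exp C₀ * ((k.factorial : ℝ) * (2/b)^k) with hKdef
    have hK0 : 0 ≤ K := by positivity
    have hpt : ∀ s : ℝ, ‖(s : ℂ) ^ k * Phi c α γ η (α * η ^ ((1 : ℝ) / 2) + s) *
        ((g η (α * η ^ ((1 : ℝ) / 2) + s) : ℝ) : ℂ)‖ ^ 2 ≤ K * Real.exp (-(b/2) * s^2) := by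
      intro s
      have hxs : (α * η ^ ((1:ℝ)/2) + s) - x₀ = s := by rw [hx₀def]; ring
      by_cases hs : |s| ≤ 2*d
      · have hphi : ‖Phi c α γ η (α * η ^ ((1:ℝ)/2) + s)‖^2
            ≤ Real.exp C₀ * Real.exp (-b * s^2) := by
          have := hPhiSq (α * η ^ ((1:ℝ)/2) + s) (by rw [hxs]; exact hs)
          rwa [hxs] at this
        have hgle : |g η (α * η ^ ((1:ℝ)/2) + s)| ≤ 1 :=
          abs_le.mpr ⟨by linarith [hg_nonneg η hη0 (α * η ^ ((1:ℝ)/2) + s)],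
            hg_le_one η hη0 (α * η ^ ((1:ℝ)/2) + s)⟩
        have hnorm : ‖(s : ℂ) ^ k * Phi c α γ η (α * η ^ ((1 : ℝ) / 2) + s) *
            ((g η (α * η ^ ((1 : ℝ) / 2) + s) : ℝ) : ℂ)‖
            = |s|^k * ‖Phi c α γ η (α * η ^ ((1:ℝ)/2) + s)‖ *
              |g η (α * η ^ ((1:ℝ)/2) + s)| := by
          simp [norm_mul, norm_pow, Complex.norm_real, Real.norm_eq_abs]
        rw [hnorm]
        have hfac : ((b/2)*s^2)^k ≤ (k.factorial : ℝ) * Real.exp ((b/2)*s^2) := by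
          have h := Real.pow_div_factorial_le_exp (x := (b/2)*s^2) (by positivity) k
          rw [div_le_iff₀ hfacpos] at h
          linarith [h]
        have hsk : (s^2)^k = (2/b)^k * ((b/2)*s^2)^k := by
          rw [← mul_pow]
          congr 1
          field_simp
          try ring
        calc (|s|^k * ‖Phi c α γ η (α * η ^ ((1:ℝ)/2) + s)‖ *
              |g η (α * η ^ ((1:ℝ)/2) + s)|)^2
            = (|s|^2)^k * ‖Phi c α γ η (α * η ^ ((1:ℝ)/2) + s)‖^2 *
              |g η (α * η ^ ((1:ℝ)/2) + s)|^2 := by ring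
        _ ≤ (|s|^2)^k * (Real.exp C₀ * Real.exp (-b * s^2)) * 1 := by
            have u2 : |g η (α * η ^ ((1:ℝ)/2) + s)|^2 ≤ 1 :=
              pow_le_one₀ (abs_nonneg _) hgle
            have u1 : (|s|^2)^k * ‖Phi c α γ η (α * η ^ ((1:ℝ)/2) + s)‖^2
                ≤ (|s|^2)^k * (Real.exp C₀ * Real.exp (-b * s^2)) :=
              mul_le_mul_of_nonneg_left hphi (by positivity)
            exact mul_le_mul u1 u2 (by positivity) (by positivity)
        _ = (s^2)^k * (Real.exp C₀ * Real.exp (-b * s^2)) := by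
            rw [_root_.sq_abs]; ring
        _ = (2/b)^k * ((b/2)*s^2)^k * (Real.exp C₀ * Real.exp (-b * s^2)) := by
            rw [hsk]
            try ring
        _ ≤ (2/b)^k * ((k.factorial : ℝ) * Real.exp ((b/2)*s^2)) *
              (Real.exp C₀ * Real.exp (-b * s^2)) := by
            have h0 : (0:ℝ) ≤ (2/b)^k := by positivity
            have h1 : (0:ℝ) ≤ Real.exp C₀ * Real.exp (-b * s^2) := by positivity
            exact mul_le_mul_of_nonneg_right
              (mul_le_mul_of_nonneg_left hfac h0) h1
        _ = K * (Real.exp ((b/2)*s^2) * Real.exp (-b * s^2)) := by rw [hKdef]; ring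
        _ = K * Real.exp (-(b/2) * s^2) := by
            rw [← Real.exp_add]
            congr 1
            ring
      · have hg0 : g η (α * η ^ ((1:ℝ)/2) + s) = 0 := by
          apply hg_zero η hη0
          rw [show α * η ^ ((1:ℝ)/2) + s - α * η ^ ((1:ℝ)/2) = s from by ring]
          show 2 * η ^ (γ/6) < |s|
          calc 2 * η ^ (γ/6) = 2*d := by rw [hddef]
          _ < |s| := not_le.1 hs
        rw [hg0]
        have h0 : (0:ℝ) ≤ K * Real.exp (-(b/2) * s^2) := by positivity
        simpa using h0
    have hint : Integrable (fun s : ℝ => K * Real.exp (-(b/2) * s^2)) :=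
      (integrable_exp_neg_mul_sq (by linarith : (0:ℝ) < b/2)).const_mul K
    have hmain : (∫ s : ℝ, ‖(s : ℂ) ^ k * Phi c α γ η (α * η ^ ((1 : ℝ) / 2) + s) *
          ((g η (α * η ^ ((1 : ℝ) / 2) + s) : ℝ) : ℂ)‖ ^ 2)
        ≤ K * Real.sqrt (Real.pi / (b/2)) := by
      calc (∫ s : ℝ, ‖(s : ℂ) ^ k * Phi c α γ η (α * η ^ ((1 : ℝ) / 2) + s) *
            ((g η (α * η ^ ((1 : ℝ) / 2) + s) : ℝ) : ℂ)‖ ^ 2)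
          ≤ ∫ s : ℝ, K * Real.exp (-(b/2) * s^2) :=
            integral_mono_of_nonneg (Filter.Eventually.of_forall fun s => by positivity)
              hint (Filter.Eventually.of_forall hpt)
      _ = K * ∫ s : ℝ, Real.exp (-(b/2) * s^2) := integral_const_mul K _
      _ = K * Real.sqrt (Real.pi / (b/2)) := by rw [integral_gaussian]
    refine hmain.trans ?_
    -- rewrite K * sqrt in terms of η powers
    have hbinv : 2/b = (2/c.im) * η ^ ((γ-1)/2) := by
      have h1 : η ^ ((γ-1)/2) = (η ^ ((1-γ)/2))⁻¹ := by
        rw [← Real.rpow_neg hη0.le]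
        congr 1
        ring
      rw [hbdef, h1, ← div_div, div_eq_mul_inv (2/c.im)]
    have hpowk : (2/b)^k = (2/c.im)^k * η ^ ((γ-1)/2 * k) := by
      rw [hbinv, mul_pow]
      congr 1
      rw [← Real.rpow_natCast (η ^ ((γ-1)/2)) k, ← Real.rpow_mul hη0.le]
    have hsqeq : Real.sqrt (Real.pi / (b/2))
        = Real.sqrt (2*Real.pi/c.im) * η ^ ((γ-1)/4) := by
      have h1 : Real.pi/(b/2) = (2*Real.pi/c.im) * η ^ ((γ-1)/2) := by
        calc Real.pi/(b/2) = Real.pi * (2/b) := by ring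
        _ = Real.pi * ((2/c.im) * η ^ ((γ-1)/2)) := by rw [hbinv]
        _ = (2*Real.pi/c.im) * η ^ ((γ-1)/2) := by ring
      rw [h1, Real.sqrt_mul (by positivity)]
      congr 1
      rw [Real.sqrt_eq_rpow, ← Real.rpow_mul hη0.le]
      congr 1
      ring
    have hKeq : K * Real.sqrt (Real.pi / (b/2))
        = D k * η ^ ((γ-1) * (2*(k:ℝ)+1) / 4) := by
      rw [hKdef, hpowk, hsqeq, hDdef]
      rw [show Real.exp C₀ * ((k.factorial : ℝ) * ((2/c.im)^k * η ^ ((γ-1)/2 * k))) *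
          (Real.sqrt (2*Real.pi/c.im) * η ^ ((γ-1)/4))
        = Real.exp C₀ * (k.factorial : ℝ) * (2/c.im)^k * Real.sqrt (2*Real.pi/c.im) *
          (η ^ ((γ-1)/2 * k) * η ^ ((γ-1)/4)) from by ring]
      rw [rpow_add']
      congr 1
      ring
    rw [hKeq]
    have hDk : D k ≤ D 1 + D 3 + D 4 := by
      rcases hk with rfl | rfl | rfl
      · linarith [hDpos 3, hDpos 4]
      · linarith [hDpos 1, hDpos 4]
      · linarith [hDpos 1, hDpos 3]
    exact mul_le_mul_of_nonneg_right hDk (Real.rpow_pos_of_pos hη0 _).le
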